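/- Let G be a temporal directed graph whose underlying graph is the union of k pairwise internally vertex-disjoint directed (s,d)-paths, each with at least one internal vertex and each realizable as a temporal (s,d)-path within [tα,tω]. Consider any process that maintains a set Φ of temporal (s,d)-paths within [tα,tω] and, at each step, adds to Φ a temporal (s,d)-path whose vertex sequence shares no internal vertex with any path currently in Φ, continuing as long as such a path exists. Then: (i) the process performs at most |V| − 2 additions (hence O(|V|) iterations); and (ii) once no such path exists, every set C ⊆ V \ {s,d} that intersects each path in Φ is a temporal (s,d)-separator within [tα,tω]. (This is the combinatorial content of Theorem 4: in the worst-case instance, after O(|V|) Global Search iterations of Algorithm 3, every solution that is feasible with respect to the surrogate path set Φ is a feasible temporal cut on the whole graph.) -/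
import Mathlib


/-- A temporal `(s,d)`-path within the time interval `[tα, tω]` in a temporal directed
graph on vertex type `V` with time-indexed edge relation `E`: a sequence of pairwise
distinct vertices `v 0 = s, …, v k = d` together with strictly increasing departure
times `t 1 < ⋯ < t k` (here `t i` is the time of the edge from `v i` to `v (i+1)`),
each edge present at its departure time, all departure times `≥ tα`, and arrival
`t k + 1 ≤ tω`.  The empty path (`k = 0`) requires `s = d`. -/
structure TPath (V : Type*) (E : ℕ → V → V → Prop) (s d : V) (tα tω : ℕ) where
  k : ℕ
  v : Fin (k + 1) → V
  t : Fin k → ℕ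
  hv0 : v 0 = s
  hvk : v (Fin.last k) = d
  inj : Function.Injective v
  mono : StrictMono t
  hedge : ∀ i : Fin k, E (t i) (v i.castSucc) (v i.succ)
  hstart : ∀ i : Fin k, tα ≤ t i
  hend : ∀ i : Fin k, t i + 1 ≤ tω

namespace TPath

variable {V : Type*} {E : ℕ → V → V → Prop} {s d : V} {tα tω : ℕ}

/-- Ending (arrival) time of a temporal path: `t k + 1`; the empty path arrives at `tα`. -/
def endTime (π : TPath V E s d tα tω) : ℕ :=
  if h : 0 < π.k then π.t ⟨π.k - 1, by omega⟩ + 1 else tα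

/-- `x` is the index of the first point of contact of the path `π` with the decoy set `C`:
`π.v x ∈ C`, and `x` is the least such index. -/
def hitsAt (π : TPath V E s d tα tω) (C : Set V) (x : Fin (π.k + 1)) : Prop :=
  π.v x ∈ C ∧ ∀ j : Fin (π.k + 1), π.v j ∈ C → x ≤ j

/-- Index of the first vertex of `π` lying in `C` (`sInf ∅ = 0` if there is none). -/
noncomputable def firstContact (π : TPath V E s d tα tω) (C : Set V) : ℕ :=
  sInf {i : ℕ | ∃ h : i < π.k + 1, π.v ⟨i, h⟩ ∈ C}

/-- Response time `RT(π, C) = t k − t x` where `v x` is the first point of contact of `π`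
with `C` (entered via the edge with time `t x`); junk value `0` if `π` does not meet `C`
properly. -/
noncomputable def RT (π : TPath V E s d tα tω) (C : Set V) : ℕ :=
  if h : 0 < π.firstContact C ∧ π.firstContact C ≤ π.k ∧ 0 < π.k then
    π.t ⟨π.k - 1, by omega⟩ - π.t ⟨π.firstContact C - 1, by omega⟩
  else 0

end TPath

/-- Earliest arrival time from the source set `S` to `x` within `[tα, tω]`
(`⊤ = ∞` if unreachable; it is `tα` for `x ∈ S`, realized by the empty path). -/
noncomputable def ea {V : Type*} (E : ℕ → V → V → Prop) (S : Set V) (tα tω : ℕ)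
    (x : V) : ℕ∞ :=
  sInf {n : ℕ∞ | ∃ s ∈ S, ∃ π : TPath V E s x tα tω, n = (π.endTime : ℕ∞)}

/-- `C` is a temporal `(S,d)`-cut within `[tα, tω]`: every temporal `(s,d)`-path within
`[tα, tω]` with `s ∈ S` contains a vertex of `C`. -/
def IsTemporalCut {V : Type*} (E : ℕ → V → V → Prop) (S : Set V) (d : V) (tα tω : ℕ)
    (C : Set V) : Prop :=
  ∀ s ∈ S, ∀ π : TPath V E s d tα tω, ∃ i, π.v i ∈ C

/-- Two temporal `(s,d)`-paths are internally disjoint if they share no internal vertex. -/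
def InternalDisjoint {V : Type*} {E : ℕ → V → V → Prop} {s d : V} {tα tω : ℕ}
    (π₁ π₂ : TPath V E s d tα tω) : Prop :=
  ∀ (a : Fin (π₁.k + 1)) (b : Fin (π₂.k + 1)),
    0 < a.val → a.val < π₁.k → 0 < b.val → b.val < π₂.k → π₁.v a ≠ π₂.v b

/-- in a temporal graph whose underlying graph is the union of `k` pairwise
internally vertex-disjoint directed `(s,d)`-paths, each with at least one internal vertex
and each realizable within `[tα, tω]`, consider any process that keeps adding to a set
`Φ` a temporal `(s,d)`-path sharing no internal vertex with any path currently in `Φ`.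
Then (i) at most `|V| − 2` additions can be performed, and (ii) once no addable path
exists (every temporal `(s,d)`-path shares an internal vertex with some path of `Φ`),
every `C ⊆ V \ {s,d}` intersecting each path of `Φ` is a temporal `(s,d)`-separator. -/
theorem surrogate_saturation {V : Type*} [Fintype V]
    (E : ℕ → V → V → Prop) (s d : V) (tα tω : ℕ) (hsd : s ≠ d)
    (k : ℕ) (m : Fin k → ℕ) (w : (i : Fin k) → Fin (m i + 1) → V)
    (hm : ∀ i, 2 ≤ m i)
    (hw0 : ∀ i, w i 0 = s) (hwlast : ∀ i, w i (Fin.last (m i)) = d)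
    (hwinj : ∀ i, Function.Injective (w i))
    (hdisj : ∀ i j, i ≠ j → ∀ (a : Fin (m i + 1)) (b : Fin (m j + 1)),
        0 < a.val → a.val < m i → 0 < b.val → b.val < m j → w i a ≠ w j b)
    (hund : ∀ u x : V, (∃ t, E t u x) ↔
        ∃ i, ∃ j : Fin (m i), w i j.castSucc = u ∧ w i j.succ = x)
    (hreal : ∀ i, ∃ π : TPath V E s d tα tω, ∃ hk : π.k = m i,
        ∀ a : Fin (π.k + 1), π.v a = w i (Fin.cast (by omega) a)) :
    (∀ (N : ℕ) (Φ₀ : Set (TPath V E s d tα tω)) (p : Fin N → TPath V E s d tα tω),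
      (∀ n : Fin N, (∀ π' ∈ Φ₀, InternalDisjoint (p n) π') ∧
        ∀ l : Fin N, l < n → InternalDisjoint (p n) (p l)) →
      N ≤ Fintype.card V - 2) ∧
    (∀ Φ : Set (TPath V E s d tα tω),
      (∀ π : TPath V E s d tα tω, ∃ π' ∈ Φ, ¬ InternalDisjoint π π') →
      ∀ C : Set V, s ∉ C → d ∉ C → (∀ π' ∈ Φ, ∃ a, π'.v a ∈ C) →
        ∀ π : TPath V E s d tα tω, ∃ a, π.v a ∈ C) := by
  classical
  -- out-edge uniqueness from an internal vertex of path i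
  have hout : ∀ (i : Fin k) (j : Fin (m i)), 0 < j.val → ∀ t x, E t (w i j.castSucc) x →
      x = w i j.succ := by
    intro i j hj t x hE
    obtain ⟨i', j', h1, h2⟩ := (hund (w i j.castSucc) x).mp ⟨t, hE⟩
    have hj' : 0 < j'.val := by
      rcases Nat.eq_zero_or_pos j'.val with h0 | h0
      · exfalso
        have : w i' j'.castSucc = w i' 0 := by
          congr 1; ext; simpa using h0
        rw [this, hw0] at h1
        have : j.castSucc = (0 : Fin (m i + 1)) := hwinj i (by rw [← h1, hw0])
        have := congrArg Fin.val this
        simp at this; omega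
      · exact h0
    rcases eq_or_ne i' i with rfl | hne
    · have : j' = j := Fin.castSucc_injective _ (hwinj i' h1)
      rw [← h2, this]
    · exfalso
      exact hdisj i' i hne j'.castSucc j.castSucc (by simpa using hj')
        (by simpa using j'.isLt) (by simpa using hj) (by simpa using j.isLt) h1
  -- every temporal (s,d)-path follows exactly one of the k paths
  have hstruct : ∀ π : TPath V E s d tα tω, ∃ i : Fin k, ∃ hk : π.k = m i,
      ∀ a : Fin (π.k + 1), π.v a = w i ⟨a.val, by omega⟩ := by
    intro π
    have hk1 : 1 ≤ π.k := by
      by_contra h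
      have hk0 : π.k = 0 := by omega
      apply hsd
      rw [← π.hv0, show (0 : Fin (π.k+1)) = Fin.last π.k from Fin.ext (by simp [hk0])]
      exact π.hvk
    have hed := π.hedge ⟨0, hk1⟩
    have hc : (⟨0, hk1⟩ : Fin π.k).castSucc = (0 : Fin (π.k + 1)) := rfl
    rw [hc, π.hv0] at hed
    obtain ⟨i, j, h1, h2⟩ := (hund s (π.v (⟨0, hk1⟩ : Fin π.k).succ)).mpr
      |> fun _ => (hund s (π.v (⟨0, hk1⟩ : Fin π.k).succ)).mp ⟨_, hed⟩
    have hj0 : j.val = 0 := by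
      have : j.castSucc = (0 : Fin (m i + 1)) := hwinj i (by rw [h1, hw0])
      have := congrArg Fin.val this; simpa using this
    have hmi := hm i
    have hv1 : π.v (⟨0, hk1⟩ : Fin π.k).succ = w i ⟨1, by omega⟩ := by
      rw [← h2]; congr 1; ext; simp [hj0]
    -- induction along the path
    have key : ∀ a : ℕ, 1 ≤ a → ∀ ham : a ≤ m i, ∃ h : a ≤ π.k,
        π.v ⟨a, by omega⟩ = w i ⟨a, by omega⟩ := by
      intro a ha
      induction a with
      | zero => omega
      | succ n ih =>
        intro hle
        rcases Nat.eq_zero_or_pos n with rfl | hn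
        · exact ⟨hk1, hv1⟩
        · obtain ⟨hnk, hvn⟩ := ih hn (by omega)
          have hnk' : n < π.k := by
            rcases Nat.lt_or_ge n π.k with h | h
            · exact h
            · exfalso
              have hnek : n = π.k := by omega
              have : π.v ⟨n, by omega⟩ = d := by
                rw [show (⟨n, by omega⟩ : Fin (π.k+1)) = Fin.last π.k from by ext; simp [hnek]]
                exact π.hvk
              rw [hvn] at this
              have := congrArg Fin.val (hwinj i (this.trans (hwlast i).symm))
              simp [Fin.last] at this; omega
          have hed := π.hedge ⟨n, hnk'⟩
          have hc : π.v (⟨n, hnk'⟩ : Fin π.k).castSucc = w i ((⟨n, by omega⟩ : Fin (m i)).castSucc) := by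
            rw [show (⟨n, hnk'⟩ : Fin π.k).castSucc = (⟨n, by omega⟩ : Fin (π.k+1)) from rfl, hvn]
            congr 1
          rw [hc] at hed
          have := hout i ⟨n, by omega⟩ (by simpa using hn) _ _ hed
          refine ⟨by omega, ?_⟩
          rw [show (⟨n+1, by omega⟩ : Fin (π.k+1)) = (⟨n, hnk'⟩ : Fin π.k).succ from rfl, this]
          congr 1
    obtain ⟨hmk, hvm⟩ := key (m i) (by omega) le_rfl
    have hkm : π.k = m i := by
      have hd : π.v ⟨m i, by omega⟩ = π.v (Fin.last π.k) := by
        rw [π.hvk, hvm]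
        exact hwlast i
      have := congrArg Fin.val (π.inj hd)
      simp [Fin.last] at this; omega
    refine ⟨i, hkm, ?_⟩
    intro a
    rcases Nat.eq_zero_or_pos a.val with h0 | h0
    · rw [show a = (0 : Fin (π.k+1)) from by ext; simpa using h0, π.hv0,
        show (⟨(0:Fin (π.k+1)).val, by omega⟩ : Fin (m i + 1)) = 0 from by ext; simp, hw0]
    · obtain ⟨_, hv⟩ := key a.val h0 (by omega)
      exact hv
  -- each path has at least 2 edges
  have hk2 : ∀ π : TPath V E s d tα tω, 2 ≤ π.k := by
    intro π
    obtain ⟨i, hk, _⟩ := hstruct π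
    rw [hk]; exact hm i
  constructor
  · -- part (i)
    intro N Φ₀ p hp
    have hinj : Function.Injective (fun n : Fin N => (p n).v ⟨1, by have := hk2 (p n); omega⟩) := by
      intro n l hnl
      by_contra hne
      rcases lt_or_gt_of_ne hne with h | h
      · exact (hp l).2 n h ⟨1, by have := hk2 (p l); omega⟩ ⟨1, by have := hk2 (p n); omega⟩
          (by simp) (by have := hk2 (p l); simpa using by omega)
          (by simp) (by have := hk2 (p n); simpa using by omega) hnl.symm
      · exact (hp n).2 l h ⟨1, by have := hk2 (p n); omega⟩ ⟨1, by have := hk2 (p l); omega⟩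
          (by simp) (by have := hk2 (p n); simpa using by omega)
          (by simp) (by have := hk2 (p l); simpa using by omega) hnl
    have hrange : ∀ n : Fin N, (p n).v ⟨1, by have := hk2 (p n); omega⟩ ∈ (Finset.univ \ {s, d} : Finset V) := by
      intro n
      have h2 := hk2 (p n)
      simp only [Finset.mem_sdiff, Finset.mem_univ, true_and, Finset.mem_insert, Finset.mem_singleton]
      push_neg
      refine ⟨fun h => ?_, fun h => ?_⟩
      · have := congrArg Fin.val ((p n).inj (h.trans (p n).hv0.symm))
        simp at this
      · have := congrArg Fin.val ((p n).inj (h.trans (p n).hvk.symm))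
        simp [Fin.last] at this; omega
    have := Finset.card_le_card_of_injOn (s := (Finset.univ : Finset (Fin N)))
      (fun n => (p n).v ⟨1, by have := hk2 (p n); omega⟩)
      (fun n _ => hrange n) (fun a _ b _ h => hinj h)
    simp only [Finset.card_univ, Fintype.card_fin] at this
    have hcard : (Finset.univ \ {s, d} : Finset V).card = Fintype.card V - 2 := by
      rw [Finset.card_sdiff_of_subset (Finset.subset_univ _)]
      congr 1
      rw [Finset.card_insert_of_notMem (by simpa using hsd), Finset.card_singleton]
    omega
  · -- part (ii)
    intro Φ hsat C hsC hdC hC π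
    obtain ⟨i, hki, hvi⟩ := hstruct π
    obtain ⟨π', hπ'Φ, hnd⟩ := hsat π
    obtain ⟨i', hki', hvi'⟩ := hstruct π'
    have hii' : i' = i := by
      rw [InternalDisjoint] at hnd
      push_neg at hnd
      obtain ⟨a, b, ha0, hak, hb0, hbk, heq⟩ := hnd
      by_contra hne
      exact hdisj i i' (fun h => hne h.symm) ⟨a.val, by omega⟩ ⟨b.val, by omega⟩
        (by simpa using ha0) (by simpa using hki ▸ hak)
        (by simpa using hb0) (by simpa using hki' ▸ hbk)
        (by rw [← hvi a, ← hvi' b]; exact heq)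
    subst hii'
    obtain ⟨c, hc⟩ := hC π' hπ'Φ
    rw [hvi' c] at hc
    exact ⟨⟨c.val, by omega⟩, by rw [hvi]; exact hc⟩
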